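/- arXiv:1102.2935 — 3 statements merged into one kernel-verified Lean document; each statement's English description precedes it below -/
import Mathlib

section
/- Let D ≥ 2, let B_1, ..., B_D be reals with B_1 > ∑_{i=2}^D B_i and B_2 > B_3 > ... > B_D > 0, let 0 < β ≤ 1 and δ > 0. Then over all vectors (c_1,...,c_D) with c_1 ≥ c_2 ≥ ... ≥ c_D ≥ 0 and β c_1 + ∑_{i=2}^D c_i = δ, the objective B_1 c_1 − ∑_{i=2}^D B_i c_i attains its minimum at c_1 = c_2 = ... = c_D = δ/(D−1+β), and the minimal value is (B_1 − ∑_{i=2}^D B_i) · δ/(D−1+β). -/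
/-!
Every feasible `c` has `c i ≤ c 1`, so the constraint gives `δ ≤ (D - 1 + β) c 1`, i.e. `c 1` is at
least the common value `m = δ / (D - 1 + β)`. Since the `B i` (`i ≥ 2`) are nonnegative, the
objective is at least `(B 1 - ∑ B i) c 1 ≥ (B 1 - ∑ B i) m`. The constant vector `m` attains
the bound.
-/

open Finset

lemma antitoneOn_Icc_of_succ_le {α : Type*} [Preorder α] {f : ℕ → α} {a b : ℕ}
    (h : ∀ i ∈ Icc a (b - 1), f (i + 1) ≤ f i) : AntitoneOn f (Set.Icc a b) :=
  antitoneOn_of_succ_le Set.ordConnected_Icc fun i _ hi hi' => by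
    simp only [Set.mem_Icc, Nat.succ_eq_succ, Nat.succ_eq_add_one] at hi hi'
    exact h i (mem_Icc.2 ⟨hi.1, by omega⟩)

lemma cast_card_Icc_two {D : ℕ} (hD : 1 ≤ D) : ((#(Icc 2 D) : ℕ) : ℝ) = D - 1 := by
  rw [Nat.card_Icc, show D + 1 - 2 = D - 1 by omega, Nat.cast_sub hD, Nat.cast_one]

theorem mul_div_card_add_le_sub_sum_mul {ι : Type*} (s : Finset ι) {B c : ι → ℝ}
    {B₁ c₁ β δ : ℝ} (hB : ∀ i ∈ s, 0 ≤ B i) (hB₁ : ∑ i ∈ s, B i ≤ B₁)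
    (hc : ∀ i ∈ s, c i ≤ c₁) (hden : 0 < #s + β) (hsum : β * c₁ + ∑ i ∈ s, c i = δ) :
    (B₁ - ∑ i ∈ s, B i) * (δ / (#s + β)) ≤ B₁ * c₁ - ∑ i ∈ s, B i * c i := by
  have hc₁ : δ / (#s + β) ≤ c₁ := by
    have := sum_le_card_nsmul s c c₁ hc
    rw [nsmul_eq_mul] at this
    rw [div_le_iff₀ hden]
    linarith
  calc (B₁ - ∑ i ∈ s, B i) * (δ / (#s + β))
      ≤ (B₁ - ∑ i ∈ s, B i) * c₁ := mul_le_mul_of_nonneg_left hc₁ (sub_nonneg.2 hB₁)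
    _ = B₁ * c₁ - ∑ i ∈ s, B i * c₁ := by rw [sub_mul, sum_mul]
    _ ≤ B₁ * c₁ - ∑ i ∈ s, B i * c i := by
      gcongr with i hi
      · exact hB i hi
      · exact hc i hi

theorem stmt0_general (D : ℕ) (hD : 2 ≤ D) (B : ℕ → ℝ) (β δ : ℝ)
    (hB1 : B 1 > ∑ i ∈ Icc 2 D, B i)
    (hBdec : ∀ i ∈ Icc 2 (D - 1), B (i + 1) < B i)
    (hBD : 0 < B D)
    (hβ0 : 0 < β) (hδ : 0 < δ) :
    IsLeast {x : ℝ | ∃ c : ℕ → ℝ,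
        (∀ i ∈ Icc 1 (D - 1), c (i + 1) ≤ c i) ∧ 0 ≤ c D ∧
        β * c 1 + ∑ i ∈ Icc 2 D, c i = δ ∧
        x = B 1 * c 1 - ∑ i ∈ Icc 2 D, B i * c i}
      ((B 1 - ∑ i ∈ Icc 2 D, B i) * (δ / ((D : ℝ) - 1 + β))) ∧
    ((let c : ℕ → ℝ := fun _ => δ / ((D : ℝ) - 1 + β)
      (∀ i ∈ Icc 1 (D - 1), c (i + 1) ≤ c i) ∧ 0 ≤ c D ∧
        β * c 1 + ∑ i ∈ Icc 2 D, c i = δ ∧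
        B 1 * c 1 - ∑ i ∈ Icc 2 D, B i * c i
          = (B 1 - ∑ i ∈ Icc 2 D, B i) * (δ / ((D : ℝ) - 1 + β)))) := by
  have hcard := cast_card_Icc_two (by omega : 1 ≤ D)
  have hden : 0 < (D : ℝ) - 1 + β := by rw [← hcard]; positivity
  set m := δ / ((D : ℝ) - 1 + β)
  have hm : 0 ≤ m := (div_pos hδ hden).le
  have hfeas : β * m + ∑ _i ∈ Icc 2 D, m = δ := by
    rw [sum_const, nsmul_eq_mul, hcard, ← add_mul, add_comm]
    exact mul_div_cancel₀ δ hden.ne'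
  have hobj : B 1 * m - ∑ i ∈ Icc 2 D, B i * m = (B 1 - ∑ i ∈ Icc 2 D, B i) * m := by
    rw [sub_mul, sum_mul]
  have hBnonneg : ∀ i ∈ Icc 2 D, 0 ≤ B i := by
    intro i hi
    obtain ⟨h2i, hiD⟩ := mem_Icc.1 hi
    exact hBD.le.trans <| antitoneOn_Icc_of_succ_le (fun j hj => (hBdec j hj).le)
      ⟨h2i, hiD⟩ ⟨hD, le_rfl⟩ hiD
  refine ⟨⟨⟨fun _ => m, fun _ _ => le_rfl, hm, hfeas, hobj.symm⟩, ?_⟩,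
    fun _ _ => le_rfl, hm, hfeas, hobj⟩
  rintro x ⟨c, hc, -, hsum, rfl⟩
  have hc1 : ∀ i ∈ Icc 2 D, c i ≤ c 1 := by
    intro i hi
    obtain ⟨h2i, hiD⟩ := mem_Icc.1 hi
    exact antitoneOn_Icc_of_succ_le hc ⟨le_rfl, by omega⟩ ⟨by omega, hiD⟩ (by omega)
  simpa only [hcard] using
    mul_div_card_add_le_sub_sum_mul _ hBnonneg hB1.le hc1 (hcard ▸ hden) hsum

/-- Minimization lemma for the diversity-order linear program. -/
theorem stmt0 (D : ℕ) (hD : 2 ≤ D) (B : ℕ → ℝ) (β δ : ℝ)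
    (hB1 : B 1 > ∑ i ∈ Icc 2 D, B i)
    (hBdec : ∀ i ∈ Icc 2 (D - 1), B (i + 1) < B i)
    (hBD : 0 < B D)
    (hβ0 : 0 < β) (hβ1 : β ≤ 1) (hδ : 0 < δ) :
    IsLeast {x : ℝ | ∃ c : ℕ → ℝ,
        (∀ i ∈ Icc 1 (D - 1), c (i + 1) ≤ c i) ∧ 0 ≤ c D ∧
        β * c 1 + ∑ i ∈ Icc 2 D, c i = δ ∧
        x = B 1 * c 1 - ∑ i ∈ Icc 2 D, B i * c i}
      ((B 1 - ∑ i ∈ Icc 2 D, B i) * (δ / ((D : ℝ) - 1 + β))) ∧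
    ((let c : ℕ → ℝ := fun _ => δ / ((D : ℝ) - 1 + β)
      (∀ i ∈ Icc 1 (D - 1), c (i + 1) ≤ c i) ∧ 0 ≤ c D ∧
        β * c 1 + ∑ i ∈ Icc 2 D, c i = δ ∧
        B 1 * c 1 - ∑ i ∈ Icc 2 D, B i * c i
          = (B 1 - ∑ i ∈ Icc 2 D, B i) * (δ / ((D : ℝ) - 1 + β)))) :=
  stmt0_general D hD B β δ hB1 hBdec hBD hβ0 hδ
end

section
/- Let M, N be positive integers and L = min(M, N). Fix K with 0 < K ≤ MN/(N+M−1). Then the minimum of ∑_{i=1}^L (|N−M| + 2i − 1) α_i over all α_1 ≥ α_2 ≥ ... ≥ α_L ≥ 0 satisfying ∑_{i=0}^{B−1} α_{L−i} + β α_{L−B} = K − r (where K = B + β, B ∈ ℕ, 0 < β ≤ 1, and 0 ≤ r ≤ K) equals M·N·(1 − r/K), achieved at α_1 = ... = α_L = 1 − r/K. -/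
/-!
Write `a = |N - M|`, so that `L (a + L) = MN`, `a + 2L = M + N` and the objective weights `a + 2i - 1`
sum to `MN` over `1 ≤ i ≤ L`. The boundary constraint is `∑ h_i α_i = K - r` for weights `h_i ∈ {0, β, 1}`
summing to `K`. The coefficients `K (a + 2i - 1) - MN h_i` then sum to zero, and their partial sums up to
`j < L` are nonnegative exactly because `K (M + N - 1) ≤ MN`. Abel summation turns this into
`K · objective ≥ MN (K - r)` for every nonincreasing `α`, with equality for the constant sequence `1 - r/K`.
-/

open Finset

theorem sum_Icc_one_eq_sum_range {M : Type*} [AddCommMonoid M] (f : ℕ → M) (n : ℕ) :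
    ∑ i ∈ Icc 1 n, f i = ∑ i ∈ range n, f (i + 1) := by
  rw [← Ico_add_one_right_eq_Icc, sum_Ico_eq_sum_range, Nat.add_sub_cancel]
  simp only [add_comm]

theorem sum_Icc_one_eq_sum_range_sub {M : Type*} [AddCommMonoid M] (f : ℕ → M) (n : ℕ) :
    ∑ i ∈ Icc 1 n, f i = ∑ k ∈ range n, f (n - k) := by
  rw [sum_Icc_one_eq_sum_range, ← sum_range_reflect]
  exact sum_congr rfl fun k hk ↦ by rw [mem_range] at hk; congr 1; omega

theorem sum_Icc_mul_nonneg_of_antitone {n : ℕ} {g α : ℕ → ℝ}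
    (hα : ∀ i ∈ Icc 1 (n - 1), α (i + 1) ≤ α i)
    (hG : ∀ j ∈ Icc 1 (n - 1), 0 ≤ ∑ i ∈ Icc 1 j, g i)
    (hsum : ∑ i ∈ Icc 1 n, g i = 0) :
    0 ≤ ∑ i ∈ Icc 1 n, g i * α i := by
  simp only [sum_Icc_one_eq_sum_range] at hG hsum ⊢
  have hparts := sum_range_by_parts (fun i ↦ α (i + 1)) (fun i ↦ g (i + 1)) n
  simp only [smul_eq_mul, hsum, mul_zero, zero_sub] at hparts
  rw [funext fun i ↦ mul_comm (g (i + 1)) (α (i + 1)), hparts, neg_nonneg]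
  refine sum_nonpos fun i hi ↦ mul_nonpos_of_nonpos_of_nonneg ?_ ?_
  · linarith [hα (i + 1) (by simp at hi ⊢; omega)]
  · exact hG (i + 1) (by simp at hi ⊢; omega)

theorem sum_Icc_add_two_mul_sub_one (a : ℝ) (n : ℕ) :
    ∑ i ∈ Icc 1 n, (a + 2 * i - 1) = n * (a + n) := by
  induction n with
  | zero => simp
  | succ n ih => rw [sum_Icc_succ_top (by omega), ih]; push_cast; ring

theorem min_mul_abs_sub_add_min (x y : ℝ) : min x y * (|y - x| + min x y) = x * y := by
  rw [← max_sub_min_eq_abs, sub_add_cancel, min_mul_max]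

theorem abs_sub_add_two_mul_min (x y : ℝ) : |y - x| + 2 * min x y = x + y := by
  linarith [max_sub_min_eq_abs x y, min_add_max x y]

def boundaryWeight (L B : ℕ) (β : ℝ) (i : ℕ) : ℝ :=
  if i + B < L then 0 else if i + B = L then β else 1

section BoundaryWeight

variable {L B : ℕ} {β : ℝ}

theorem sum_Icc_boundaryWeight (hBL : B < L) (j : ℕ) :
    ∑ i ∈ Icc 1 j, boundaryWeight L B β i = if j + B < L then 0 else β + (j + B - L) := by
  induction j with
  | zero => simp [hBL]
  | succ j ih =>
    rw [sum_Icc_succ_top (by omega), ih, boundaryWeight]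
    split_ifs <;> first | omega | (rify at *; linarith)

theorem sum_Icc_boundaryWeight_mul (hBL : B < L) (α : ℕ → ℝ) :
    ∑ i ∈ Icc 1 L, boundaryWeight L B β i * α i = ∑ i ∈ range B, α (L - i) + β * α (L - B) := by
  have h_top : ∀ k ∈ range B, boundaryWeight L B β (L - k) * α (L - k) = α (L - k) := by
    intro k hk
    rw [mem_range] at hk
    rw [boundaryWeight, if_neg (by omega), if_neg (by omega), one_mul]
  have h_bottom : ∀ k ∈ Ico (B + 1) L, boundaryWeight L B β (L - k) * α (L - k) = 0 := by
    intro k hk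
    rw [mem_Ico] at hk
    rw [boundaryWeight, if_pos (by omega), zero_mul]
  rw [sum_Icc_one_eq_sum_range_sub, ← sum_range_add_sum_Ico _ (by omega : B + 1 ≤ L),
    sum_range_succ, sum_congr rfl h_top, sum_eq_zero h_bottom, boundaryWeight,
    if_neg (by omega), if_pos (by omega), add_zero]

variable {a K : ℝ}

theorem mul_sum_Icc_boundaryWeight_le (hBL : B < L) (hK : K = B + β) (ha : 0 ≤ a) (hK0 : 0 ≤ K)
    (hKL : K * (a + 2 * L - 1) ≤ L * (a + L)) {j : ℕ} (hjL : j < L) :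
    L * (a + L) * ∑ i ∈ Icc 1 j, boundaryWeight L B β i ≤ K * (j * (a + j)) := by
  rw [sum_Icc_boundaryWeight hBL]
  split_ifs
  · rw [mul_zero]; positivity
  · have hjL' : (j : ℝ) + 1 ≤ L := by exact_mod_cast hjL
    have hslack : 0 ≤ L * (a + L) - K * (a + L + j) := by
      nlinarith [mul_le_mul_of_nonneg_left (by linarith : a + L + j ≤ a + 2 * L - 1) hK0]
    calc L * (a + L) * (β + (j + B - L))
        = K * (j * (a + j)) - (L - j) * (L * (a + L) - K * (a + L + j)) := by rw [hK]; ring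
      _ ≤ K * (j * (a + j)) := sub_le_self _ (mul_nonneg (by linarith) hslack)

theorem mul_sum_boundaryWeight_mul_le (hBL : B < L) (hK : K = B + β) (ha : 0 ≤ a) (hK0 : 0 ≤ K)
    (hKL : K * (a + 2 * L - 1) ≤ L * (a + L)) {α : ℕ → ℝ}
    (hα : ∀ i ∈ Icc 1 (L - 1), α (i + 1) ≤ α i) :
    L * (a + L) * ∑ i ∈ Icc 1 L, boundaryWeight L B β i * α i
      ≤ K * ∑ i ∈ Icc 1 L, (a + 2 * i - 1) * α i := by
  set g : ℕ → ℝ := fun i ↦ K * (a + 2 * i - 1) - L * (a + L) * boundaryWeight L B β i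
  have hg : ∀ j, ∑ i ∈ Icc 1 j, g i
      = K * (j * (a + j)) - L * (a + L) * ∑ i ∈ Icc 1 j, boundaryWeight L B β i := fun j ↦ by
    rw [sum_sub_distrib, ← mul_sum, ← mul_sum, sum_Icc_add_two_mul_sub_one]
  have hG : ∀ j ∈ Icc 1 (L - 1), 0 ≤ ∑ i ∈ Icc 1 j, g i := fun j hj ↦ by
    rw [hg, sub_nonneg]
    exact mul_sum_Icc_boundaryWeight_le hBL hK ha hK0 hKL (by rw [mem_Icc] at hj; omega)
  have hsum : ∑ i ∈ Icc 1 L, g i = 0 := by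
    rw [hg, sum_Icc_boundaryWeight hBL, if_neg (by omega), hK]
    ring
  rw [← sub_nonneg, mul_sum, mul_sum, ← sum_sub_distrib]
  convert sum_Icc_mul_nonneg_of_antitone hα hG hsum using 2 with i
  ring

end BoundaryWeight

theorem stmt3_general (M N : ℕ) (hM : 0 < M) (hN : 0 < N)
    (L : ℕ) (hL : L = min M N)
    (B : ℕ) (β K r : ℝ)
    (hβ0 : 0 < β)
    (hKB : K = (B : ℝ) + β) (hK0 : 0 < K)
    (hKle : K ≤ (M : ℝ) * N / ((N : ℝ) + M - 1))
    (hrK : r ≤ K) :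
    IsLeast {x : ℝ | ∃ α : ℕ → ℝ,
        (∀ i ∈ Icc 1 (L - 1), α (i + 1) ≤ α i) ∧ 0 ≤ α L ∧
        (∑ i ∈ Finset.range B, α (L - i)) + β * α (L - B) = K - r ∧
        x = ∑ i ∈ Icc 1 L, (|(N : ℝ) - M| + 2 * i - 1) * α i}
      ((M : ℝ) * N * (1 - r / K)) ∧
    ((∑ _i ∈ Finset.range B, (1 - r / K)) + β * (1 - r / K) = K - r ∧
      ∑ i ∈ Icc 1 L, (|(N : ℝ) - M| + 2 * i - 1) * (1 - r / K)
        = (M : ℝ) * N * (1 - r / K)) := by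
  have hLmin : (L : ℝ) = min (M : ℝ) N := by rw [hL, Nat.cast_min]
  have hL1 : (1 : ℝ) ≤ L := by
    rw [hLmin]; exact le_min (by exact_mod_cast hM) (by exact_mod_cast hN)
  have hW : (L : ℝ) * (|(N : ℝ) - M| + L) = M * N := by rw [hLmin, min_mul_abs_sub_add_min]
  have hKL : K * (|(N : ℝ) - M| + 2 * L - 1) ≤ L * (|(N : ℝ) - M| + L) := by
    have hden : (0 : ℝ) < N + M - 1 := by linarith [min_le_left (M : ℝ) N, min_le_right (M : ℝ) N]
    rwa [hW, hLmin, abs_sub_add_two_mul_min, add_comm (M : ℝ), ← le_div_iff₀ hden]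
  have hBL : B < L := by
    have : K ≤ L := by nlinarith [abs_nonneg ((N : ℝ) - M)]
    exact_mod_cast (show (B : ℝ) < L by linarith)
  have hconst : (∑ _i ∈ range B, (1 - r / K)) + β * (1 - r / K) = K - r := by
    rw [sum_const, card_range, nsmul_eq_mul, ← add_mul, ← hKB]
    field_simp
  have hobj : ∑ i ∈ Icc 1 L, (|(N : ℝ) - M| + 2 * i - 1) * (1 - r / K) = M * N * (1 - r / K) := by
    rw [← sum_mul, sum_Icc_add_two_mul_sub_one, hW]
  refine ⟨⟨⟨fun _ ↦ 1 - r / K, fun _ _ ↦ le_rfl, ?_, hconst, hobj.symm⟩, ?_⟩, hconst, hobj⟩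
  · exact sub_nonneg.mpr (div_le_one_of_le₀ hrK hK0.le)
  rintro _ ⟨α, hα, -, hcon, rfl⟩
  have hbound := mul_sum_boundaryWeight_mul_le hBL hKB (abs_nonneg _) hK0.le hKL hα
  rw [sum_Icc_boundaryWeight_mul hBL, hcon, hW] at hbound
  rw [show (M : ℝ) * N * (1 - r / K) = M * N * (K - r) / K by field_simp, div_le_iff₀ hK0]
  linarith

/-- Diversity upper-bound optimization in the regime `0 < K ≤ MN/(N+M-1)`:
the minimum of `∑_{i=1}^L (|N-M|+2i-1) α_i` subject to the ordering and boundary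
constraints equals `MN(1 - r/K)`, achieved at `α_1 = ⋯ = α_L = 1 - r/K`. -/
theorem stmt3 (M N : ℕ) (hM : 0 < M) (hN : 0 < N)
    (L : ℕ) (hL : L = min M N)
    (B : ℕ) (β K r : ℝ)
    (hβ0 : 0 < β) (hβ1 : β ≤ 1)
    (hKB : K = (B : ℝ) + β) (hK0 : 0 < K)
    (hKle : K ≤ (M : ℝ) * N / ((N : ℝ) + M - 1))
    (hr0 : 0 ≤ r) (hrK : r ≤ K) :
    IsLeast {x : ℝ | ∃ α : ℕ → ℝ,
        (∀ i ∈ Icc 1 (L - 1), α (i + 1) ≤ α i) ∧ 0 ≤ α L ∧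
        (∑ i ∈ Finset.range B, α (L - i)) + β * α (L - B) = K - r ∧
        x = ∑ i ∈ Icc 1 L, (|(N : ℝ) - M| + 2 * i - 1) * α i}
      ((M : ℝ) * N * (1 - r / K)) ∧
    ((∑ _i ∈ Finset.range B, (1 - r / K)) + β * (1 - r / K) = K - r ∧
      ∑ i ∈ Icc 1 L, (|(N : ℝ) - M| + 2 * i - 1) * (1 - r / K)
        = (M : ℝ) * N * (1 - r / K)) :=
  stmt3_general M N hM hN L hL B β K r hβ0 hKB hK0 hKle hrK
end

section
/- Let M, N be positive integers, L = min(M, N), and consider the transmission scheme G_l for 0 ≤ l ≤ L−1 with T_l = N+M−1−2l channel uses, where (for N ≥ M) the blocks of the effective channel are Ĥ_i = H for i = 1,...,N−M+1, Ĥ_{N−M+2k} = (h_1,...,h_{M−k}) and Ĥ_{N−M+2k+1} = (h_{k+1},...,h_M) for k = 1,...,M−1−l. Then for any 1 ≤ j ≤ i ≤ M with i − j < L, the columns h_j, ..., h_i occur together in at most N − i + j blocks. -/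
/-!
The first `N - M + 1` blocks are counted in full. Past them the blocks come in pairs
`(h_1, …, h_{M-k})`, `(h_{k+1}, …, h_M)`: the first contains `h_j, …, h_i` only when `k ≤ M - i`,
the second only when `k ≤ j - 1`. Hence at most `(N - M + 1) + (M - i) + (j - 1) = N - i + j`
blocks contain all of `h_j, …, h_i`.
-/

open Finset

lemma Nat.exists_eq_add_two_mul_sub_one_or_eq_add_two_mul {a m : ℕ} (h : a < m) :
    ∃ k, 1 ≤ k ∧ (m = a + 2 * k - 1 ∨ m = a + 2 * k) :=
  ⟨(m - a + 1) / 2, by omega, by omega⟩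

section PairedBlocks

variable {F K M i j : ℕ} {block : ℕ → Finset ℕ}

lemma filter_Icc_subset_block_subset (hi : 1 ≤ i) (hji : j ≤ i)
    (hleft : ∀ k, 1 ≤ k → k ≤ K → block (F + 2 * k - 1) = Icc 1 (M - k))
    (hright : ∀ k, 1 ≤ k → k ≤ K → block (F + 2 * k) = Icc (k + 1) M) :
    (Icc 1 (F + 2 * K)).filter (fun m => Icc j i ⊆ block m) ⊆
      Icc 1 F ∪ (Icc 1 (M - i)).image (fun k => F + 2 * k - 1) ∪
        (Icc 1 (j - 1)).image (fun k => F + 2 * k) := by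
  intro m hm
  obtain ⟨hm, hcont⟩ := mem_filter.mp hm
  rw [mem_Icc] at hm
  by_cases hmF : m ≤ F
  · exact mem_union_left _ (mem_union_left _ (mem_Icc.mpr ⟨hm.1, hmF⟩))
  obtain ⟨k, hk, hm_eq | hm_eq⟩ :=
    Nat.exists_eq_add_two_mul_sub_one_or_eq_add_two_mul (not_le.mp hmF)
  · have hiM : i ≤ M - k := by
      rw [hm_eq, hleft k hk (by omega), Icc_subset_Icc_iff hji] at hcont
      exact hcont.2
    exact mem_union_left _ (mem_union_right _
      (mem_image.mpr ⟨k, mem_Icc.mpr ⟨hk, by omega⟩, hm_eq.symm⟩))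
  · have hkj : k + 1 ≤ j := by
      rw [hm_eq, hright k hk (by omega), Icc_subset_Icc_iff hji] at hcont
      exact hcont.1
    exact mem_union_right _ (mem_image.mpr ⟨k, mem_Icc.mpr ⟨hk, by omega⟩, hm_eq.symm⟩)

lemma card_filter_Icc_subset_block_le {T : ℕ} (hT : T ≤ F + 2 * K) (hi : 1 ≤ i) (hji : j ≤ i)
    (hleft : ∀ k, 1 ≤ k → k ≤ K → block (F + 2 * k - 1) = Icc 1 (M - k))
    (hright : ∀ k, 1 ≤ k → k ≤ K → block (F + 2 * k) = Icc (k + 1) M) :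
    #((Icc 1 T).filter (fun m => Icc j i ⊆ block m)) ≤ F + (M - i) + (j - 1) :=
  calc #((Icc 1 T).filter (fun m => Icc j i ⊆ block m))
      _ ≤ #((Icc 1 (F + 2 * K)).filter (fun m => Icc j i ⊆ block m)) :=
        card_le_card (filter_subset_filter _ (Icc_subset_Icc_right hT))
      _ ≤ #(Icc 1 F ∪ (Icc 1 (M - i)).image (fun k => F + 2 * k - 1) ∪
            (Icc 1 (j - 1)).image (fun k => F + 2 * k)) :=
        card_le_card (filter_Icc_subset_block_subset hi hji hleft hright)
      _ ≤ #(Icc 1 F) + #(Icc 1 (M - i)) + #(Icc 1 (j - 1)) := by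
        grw [card_union_le, card_union_le, card_image_le, card_image_le]
      _ = F + (M - i) + (j - 1) := by simp only [Nat.card_Icc, Nat.add_sub_cancel]

end PairedBlocks

theorem stmt14_general (M N l : ℕ) (hNM : M ≤ N)
    (block : ℕ → Finset ℕ)
    (h2 : ∀ k : ℕ, 1 ≤ k → k ≤ M - 1 - l → block (N - M + 1 + 2 * k - 1) = Finset.Icc 1 (M - k))
    (h3 : ∀ k : ℕ, 1 ≤ k → k ≤ M - 1 - l → block (N - M + 1 + 2 * k) = Finset.Icc (k + 1) M)
    (i j : ℕ) (hj : 1 ≤ j) (hji : j ≤ i) (hiM : i ≤ M) :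
    ((Finset.Icc 1 (N + M - 1 - 2 * l)).filter
        (fun m => Finset.Icc j i ⊆ block m)).card ≤ N - i + j := by
  have hT : N + M - 1 - 2 * l ≤ N - M + 1 + 2 * (M - 1 - l) := by omega
  have hcount := card_filter_Icc_subset_block_le hT (hj.trans hji) hji h2 h3
  omega

/-- For the transmission scheme `G_l` with `N ≥ M` (blocks of the effective channel as
described), the columns `h_j, …, h_i` occur together in at most `N - i + j` blocks. -/
theorem stmt14 (M N l : ℕ) (hM : 1 ≤ M) (hNM : M ≤ N) (hl : l ≤ min M N - 1)
    (block : ℕ → Finset ℕ)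
    (h1 : ∀ m : ℕ, 1 ≤ m → m ≤ N - M + 1 → block m = Finset.Icc 1 M)
    (h2 : ∀ k : ℕ, 1 ≤ k → k ≤ M - 1 - l → block (N - M + 1 + 2 * k - 1) = Finset.Icc 1 (M - k))
    (h3 : ∀ k : ℕ, 1 ≤ k → k ≤ M - 1 - l → block (N - M + 1 + 2 * k) = Finset.Icc (k + 1) M)
    (i j : ℕ) (hj : 1 ≤ j) (hji : j ≤ i) (hiM : i ≤ M) (hij : i - j < min M N) :
    ((Finset.Icc 1 (N + M - 1 - 2 * l)).filter
        (fun m => Finset.Icc j i ⊆ block m)).card ≤ N - i + j :=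
  stmt14_general M N l hNM block h2 h3 i j hj hji hiM
end
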